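/- arXiv:2408.00315 — 6 statements merged into one kernel-verified Lean document; each statement's English description precedes it below -/
import Mathlib

section
/- Let T ≥ 1 and let α_1, …, α_T be reals with 0 < α_i < 1 for each i; set ᾱ_t = ∏_{i=1}^t α_i for 0 ≤ t ≤ T (so ᾱ_0 = 1 and 0 < ᾱ_T < 1). Define k_t = √ᾱ_t − ᾱ_T(1 − ᾱ_t)/(√ᾱ_t (1 − ᾱ_T)) for 0 ≤ t ≤ T. Then k_0 = 1, k_T = 0, and for every 1 ≤ t ≤ T the elimination equation √α_t (√α_t · k_{t−1} − k_t)(1 − ᾱ_{t−1}) = (√ᾱ_{t−1} − k_{t−1})(1 − α_t) holds. -/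
open Real Finset

private lemma adbm_key (u v A s a : ℝ) (hs : u * u = s) (ha : v * v = a)
    (hu : u ≠ 0) (hv : v ≠ 0) (hA : 1 - A ≠ 0) :
    v * (v * (u - A * (1 - s) / (u * (1 - A)))
        - (u * v - A * (1 - s * a) / (u * v * (1 - A)))) * (1 - s)
      = (u - (u - A * (1 - s) / (u * (1 - A)))) * (1 - a) := by
  subst hs; subst ha
  field_simp
  ring

/-- Closed-form coefficient schedule `k_t` of ADBM: boundary conditions `k_0 = 1`,
`k_T = 0`, and the elimination equation (Eq. 6 of the paper) for all `1 ≤ t ≤ T`. -/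
theorem adbm_kt_closed_form (T : ℕ) (hT : 1 ≤ T) (α : ℕ → ℝ)
    (hα : ∀ i, 1 ≤ i → i ≤ T → 0 < α i ∧ α i < 1)
    (abar k : ℕ → ℝ)
    (habar : ∀ t, t ≤ T → abar t = ∏ i ∈ Finset.Icc 1 t, α i)
    (hk : ∀ t, t ≤ T → k t =
      Real.sqrt (abar t) - abar T * (1 - abar t) / (Real.sqrt (abar t) * (1 - abar T))) :
    k 0 = 1 ∧ k T = 0 ∧
    ∀ t, 1 ≤ t → t ≤ T →
      Real.sqrt (α t) * (Real.sqrt (α t) * k (t - 1) - k t) * (1 - abar (t - 1))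
        = (Real.sqrt (abar (t - 1)) - k (t - 1)) * (1 - α t) := by
  have habar0 : abar 0 = 1 := by rw [habar 0 (Nat.zero_le T)]; simp
  have hpos : ∀ t, t ≤ T → 0 < abar t := by
    intro t ht
    rw [habar t ht]
    exact Finset.prod_pos fun i hi => (hα i (Finset.mem_Icc.mp hi).1
      (le_trans (Finset.mem_Icc.mp hi).2 ht)).1
  have hA1 : abar T < 1 := by
    rw [habar T le_rfl]
    calc ∏ i ∈ Finset.Icc 1 T, α i < ∏ i ∈ Finset.Icc 1 T, 1 := by
          apply Finset.prod_lt_prod_of_nonempty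
          · intro i hi
            exact (hα i (Finset.mem_Icc.mp hi).1 (Finset.mem_Icc.mp hi).2).1
          · intro i hi
            exact (hα i (Finset.mem_Icc.mp hi).1 (Finset.mem_Icc.mp hi).2).2
          · exact ⟨1, Finset.mem_Icc.mpr ⟨le_rfl, hT⟩⟩
      _ = 1 := Finset.prod_const_one
  have hAne : 1 - abar T ≠ 0 := by linarith
  refine ⟨?_, ?_, ?_⟩
  · rw [hk 0 (Nat.zero_le T), habar0]; simp
  · have hApos := hpos T le_rfl
    rw [hk T le_rfl]
    rw [mul_comm (Real.sqrt (abar T)) (1 - abar T), mul_div_assoc,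
      div_mul_eq_div_div, div_self hAne, mul_one_div, Real.div_sqrt, sub_self]
  · intro t ht1 htT
    have ht' : t - 1 ≤ T := le_trans (Nat.sub_le t 1) htT
    have hstep : abar t = abar (t - 1) * α t := by
      rw [habar t htT, habar (t - 1) ht']
      have : t = (t - 1) + 1 := (Nat.succ_pred_eq_of_pos ht1).symm
      rw [this, Finset.prod_Icc_succ_top (Nat.le_add_left 1 (t-1))]
      simp
    have hs := hpos (t - 1) ht'
    have ha := (hα t ht1 htT).1
    have e1 : Real.sqrt (abar t) = Real.sqrt (abar (t-1)) * Real.sqrt (α t) := by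
      rw [hstep, Real.sqrt_mul hs.le]
    rw [hk t htT, hk (t - 1) ht', e1, hstep]
    exact adbm_key (Real.sqrt (abar (t-1))) (Real.sqrt (α t)) (abar T) (abar (t-1)) (α t)
      (Real.mul_self_sqrt hs.le) (Real.mul_self_sqrt ha.le)
      (ne_of_gt (Real.sqrt_pos.mpr hs)) (ne_of_gt (Real.sqrt_pos.mpr ha)) hAne
end

section
/- Let T ≥ 2 and let α_1, …, α_T be reals with 0 < α_i < 1 for each i; set ᾱ_t = ∏_{i=1}^t α_i for 0 ≤ t ≤ T. Suppose γ_0, γ_1, …, γ_T are reals satisfying the recurrence (α_t/(1 − α_t) + 1/(1 − ᾱ_{t−1})) γ_{t−1} = 1/(1 − ᾱ_{t−1}) + (α_t/(1 − α_t)) γ_t for every 2 ≤ t ≤ T. Then for every 1 ≤ t ≤ T one has γ_t − 1 = (ᾱ_1 (1 − ᾱ_t))/(ᾱ_t (1 − ᾱ_1)) (γ_1 − 1). -/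
open Real Finset

/-- General solution of the ADBM linear recurrence (Eq. A.9 of the paper):
every `γ_t` (for `1 ≤ t ≤ T`) is expressed in terms of the initial value `γ_1`. -/
theorem adbm_gamma_recurrence_solution (T : ℕ) (hT : 2 ≤ T) (α : ℕ → ℝ)
    (hα : ∀ i, 1 ≤ i → i ≤ T → 0 < α i ∧ α i < 1)
    (abar : ℕ → ℝ)
    (habar : ∀ t, t ≤ T → abar t = ∏ i ∈ Finset.Icc 1 t, α i)
    (γ : ℕ → ℝ)
    (hrec : ∀ t, 2 ≤ t → t ≤ T →
      (α t / (1 - α t) + 1 / (1 - abar (t - 1))) * γ (t - 1)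
        = 1 / (1 - abar (t - 1)) + (α t / (1 - α t)) * γ t) :
    ∀ t, 1 ≤ t → t ≤ T →
      γ t - 1 = (abar 1 * (1 - abar t)) / (abar t * (1 - abar 1)) * (γ 1 - 1) := by
  have hpos : ∀ t, t ≤ T → 0 < abar t := by
    intro t htT
    rw [habar t htT]
    apply Finset.prod_pos
    intro i hi
    rw [Finset.mem_Icc] at hi
    exact (hα i hi.1 (hi.2.trans htT)).1
  have hmul : ∀ t, 1 ≤ t → t ≤ T → abar t = abar (t - 1) * α t := by
    intro t ht1 htT
    rw [habar t htT, habar (t - 1) (by omega)]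
    have ht : t - 1 + 1 = t := by omega
    rw [← ht, Finset.prod_Icc_succ_top (by omega), ht]
  have hlt : ∀ t, 1 ≤ t → t ≤ T → abar t < 1 := by
    intro t ht1
    induction t, ht1 using Nat.le_induction with
    | base =>
      intro h1T
      rw [habar 1 h1T]
      simpa using (hα 1 le_rfl h1T).2
    | succ t ht ih =>
      intro hsT
      have h1 := ih (by omega)
      have h2 := (hα (t + 1) (by omega) hsT).2
      have h3 := (hα (t + 1) (by omega) hsT).1
      have h4 := hpos t (by omega)
      have hm := hmul (t + 1) (by omega) hsT
      simp only [Nat.add_sub_cancel] at hm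
      rw [hm]
      nlinarith
  intro t ht1
  induction t, ht1 using Nat.le_induction with
  | base =>
    intro h1T
    have h1 := hpos 1 h1T
    have h2 := hlt 1 le_rfl h1T
    have hne : abar 1 * (1 - abar 1) ≠ 0 := by nlinarith
    field_simp
    rw [mul_div_assoc, div_self (sub_ne_zero.mpr h2.ne'), mul_one]
  | succ t ht ih =>
    intro hsT
    have ihv := ih (by omega)
    have hrt := hrec (t + 1) (by omega) hsT
    simp only [Nat.add_sub_cancel] at hrt
    have h1 := hpos 1 (by omega)
    have h2 := hlt 1 le_rfl (by omega)
    have h3 := hpos t (by omega)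
    have h4 := hlt t ht (by omega)
    have h5 := (hα (t + 1) (by omega) hsT).1
    have h6 := (hα (t + 1) (by omega) hsT).2
    have hm := hmul (t + 1) (by omega) hsT
    simp only [Nat.add_sub_cancel] at hm
    have hs1 : 0 < abar (t + 1) := hpos (t + 1) hsT
    have hs2 : abar (t + 1) < 1 := hlt (t + 1) (by omega) hsT
    rw [hm]
    have hne1 : (1 : ℝ) - α (t + 1) ≠ 0 := by linarith
    have hne2 : (1 : ℝ) - abar t ≠ 0 := by linarith
    have hne3 : α (t + 1) ≠ 0 := by linarith
    have hne4 : abar t ≠ 0 := by linarith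
    have hne5 : (1 : ℝ) - abar 1 ≠ 0 := by linarith
    have hne6 : abar 1 ≠ 0 := by linarith
    have e1 : α (t + 1) / (1 - α (t + 1)) * (γ (t + 1) - γ t)
        = 1 / (1 - abar t) * (γ t - 1) := by
      linear_combination -hrt
    have key : α (t + 1) * (1 - abar t) * (γ (t + 1) - 1)
        = (1 - abar t * α (t + 1)) * (γ t - 1) := by
      field_simp at e1
      linear_combination e1
    have key2 : γ (t + 1) - 1
        = (1 - abar t * α (t + 1)) / (α (t + 1) * (1 - abar t)) * (γ t - 1) := by
      rw [div_mul_eq_mul_div, eq_div_iff (by positivity)]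
      linear_combination key
    rw [key2, ihv]
    field_simp
end

section
/- Let T ≥ 2 and let α_1, …, α_T be reals with 0 < α_i < 1 for each i; set ᾱ_t = ∏_{i=1}^t α_i for 0 ≤ t ≤ T (so 0 < ᾱ_T < 1). Suppose γ_0, γ_1, …, γ_T are reals satisfying (α_t/(1 − α_t) + 1/(1 − ᾱ_{t−1})) γ_{t−1} = 1/(1 − ᾱ_{t−1}) + (α_t/(1 − α_t)) γ_t for every 2 ≤ t ≤ T, and additionally γ_T = 0. Then γ_1 = 1 − ᾱ_T(1 − ᾱ_1)/(ᾱ_1 (1 − ᾱ_T)), and more generally γ_t = 1 − ᾱ_T(1 − ᾱ_t)/(ᾱ_t (1 − ᾱ_T)) for every 1 ≤ t ≤ T. -/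
open Real Finset

/-- With the boundary condition `γ_T = 0`, the ADBM linear recurrence has the unique
closed-form solution `γ_t = 1 − ᾱ_T(1 − ᾱ_t)/(ᾱ_t (1 − ᾱ_T))` for `1 ≤ t ≤ T`. -/
theorem adbm_gamma_closed_form (T : ℕ) (hT : 2 ≤ T) (α : ℕ → ℝ)
    (hα : ∀ i, 1 ≤ i → i ≤ T → 0 < α i ∧ α i < 1)
    (abar : ℕ → ℝ)
    (habar : ∀ t, t ≤ T → abar t = ∏ i ∈ Finset.Icc 1 t, α i)
    (γ : ℕ → ℝ)
    (hrec : ∀ t, 2 ≤ t → t ≤ T →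
      (α t / (1 - α t) + 1 / (1 - abar (t - 1))) * γ (t - 1)
        = 1 / (1 - abar (t - 1)) + (α t / (1 - α t)) * γ t)
    (hγT : γ T = 0) :
    γ 1 = 1 - abar T * (1 - abar 1) / (abar 1 * (1 - abar T)) ∧
    ∀ t, 1 ≤ t → t ≤ T →
      γ t = 1 - abar T * (1 - abar t) / (abar t * (1 - abar T)) := by
  -- bounds on abar
  have hbnd : ∀ t, 1 ≤ t → t ≤ T → 0 < abar t ∧ abar t < 1 := by
    intro t ht
    induction t, ht using Nat.le_induction with
    | base =>
      intro _
      have h1 := hα 1 le_rfl (by omega)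
      rw [habar 1 (by omega)]
      simpa using h1
    | succ n hn ih =>
      intro htT
      have hnT : n ≤ T := by omega
      have ihn := ih hnT
      have hstep : abar (n + 1) = abar n * α (n + 1) := by
        rw [habar (n+1) htT, habar n hnT, Finset.prod_Icc_succ_top (by omega : 1 ≤ n + 1)]
      have h1 := hα (n+1) (by omega) htT
      rw [habar n hnT] at ihn
      rw [hstep, habar n hnT]
      constructor
      · exact mul_pos ihn.1 h1.1
      · nlinarith [ihn.1, ihn.2, h1.1, h1.2]
  have hmul : ∀ t, 2 ≤ t → t ≤ T → abar t = abar (t - 1) * α t := by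
    intro t ht htT
    obtain ⟨n, rfl⟩ : ∃ n, t = n + 1 := ⟨t - 1, by omega⟩
    simp only [Nat.add_sub_cancel]
    rw [habar (n+1) htT, habar n (by omega), Finset.prod_Icc_succ_top (by omega : 1 ≤ n + 1)]
  have haT := hbnd T (by omega) le_rfl
  have hTne : (1 : ℝ) - abar T ≠ 0 := by linarith [haT.2]
  -- define f
  set f : ℕ → ℝ := fun t => 1 - abar T * (1 - abar t) / (abar t * (1 - abar T)) with hf
  -- step: if γ t = f t then γ (t-1) = f (t-1)
  have hstep : ∀ t, 2 ≤ t → t ≤ T → γ t = f t → γ (t - 1) = f (t - 1) := by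
    intro t ht htT hγt
    have hbt := hbnd t (by omega) htT
    have hbt1 := hbnd (t - 1) (by omega) (by omega)
    have hαt := hα t (by omega) htT
    have hm := hmul t ht htT
    have hrec' := hrec t ht htT
    rw [hγt] at hrec'
    have hc : (0:ℝ) < α t / (1 - α t) + 1 / (1 - abar (t - 1)) := by
      have : (0:ℝ) < α t / (1 - α t) := div_pos hαt.1 (by linarith [hαt.2])
      have : (0:ℝ) < 1 / (1 - abar (t - 1)) := by
        apply div_pos one_pos; linarith [hbt1.2]
      linarith
    have hfeq : (α t / (1 - α t) + 1 / (1 - abar (t - 1))) * f (t - 1)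
        = 1 / (1 - abar (t - 1)) + (α t / (1 - α t)) * f t := by
      simp only [hf]
      have h1 : (1:ℝ) - α t ≠ 0 := by linarith [hαt.2]
      have h2 : (1:ℝ) - abar (t-1) ≠ 0 := by linarith [hbt1.2]
      have h3 : abar (t-1) ≠ 0 := ne_of_gt hbt1.1
      have h4 : abar t ≠ 0 := ne_of_gt hbt.1
      field_simp
      rw [hm]
      ring
    have := hrec'.trans hfeq.symm
    exact mul_left_cancel₀ (ne_of_gt hc) this
  -- downward induction
  have hmain : ∀ d, d ≤ T - 1 → γ (T - d) = f (T - d) := by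
    intro d
    induction d with
    | zero =>
      intro _
      simp only [Nat.sub_zero, hγT, hf]
      rw [div_self (mul_ne_zero (ne_of_gt haT.1) hTne)]
      ring
    | succ n ih =>
      intro hd
      have h1 := ih (by omega)
      have h2 := hstep (T - n) (by omega) (by omega) h1
      have : T - n - 1 = T - (n + 1) := by omega
      rwa [this] at h2
  have hall : ∀ t, 1 ≤ t → t ≤ T → γ t = f t := by
    intro t ht htT
    have := hmain (T - t) (by omega)
    rwa [show T - (T - t) = t by omega] at this
  exact ⟨hall 1 le_rfl (by omega), hall⟩
end

section
/- Let d ≥ 1, T ≥ 1, and let α_1, …, α_T be reals with 0 < α_i < 1; set ᾱ_t = ∏_{i=1}^t α_i (so 0 < ᾱ_T < 1). Let γ be the standard Gaussian measure on ℝ^d (the d-fold product of the Gaussian measure on ℝ with mean 0 and variance 1). Fix x_0, ε_a ∈ ℝ^d, a real δ ≥ 0, and measurable maps ε_θ(·, t) : ℝ^d → ℝ^d for 1 ≤ t ≤ T. For ε ∈ ℝ^d and 1 ≤ t ≤ T set x_t^d(ε) = √ᾱ_t x_0 + √(1 − ᾱ_t) ε + (ᾱ_T(1 − ᾱ_t)/(√ᾱ_t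 (1 − ᾱ_T))) ε_a. Assume the loss bound (1/T) ∑_{t=1}^{T} ∫ ‖(ᾱ_T √(1 − ᾱ_t)/((1 − ᾱ_T)√ᾱ_t)) ε_a + ε − ε_θ(x_t^d(ε), t)‖² dγ(ε) ≤ δ. Define the one-step DDIM purification output x̂_0(ε) = x_0 + ε_a + (√(1 − ᾱ_T)/√ᾱ_T)(ε − ε_θ(x_T^d(ε), T)). Then ∫ ‖x̂_0(ε) − x_0‖² dγ(ε) ≤ ((1 − ᾱ_T) T/ᾱ_T) · δ. -/
open Real Finset MeasureTheory ProbabilityTheory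

/-- Theorem 1 of the paper: if the ADBM training loss, averaged over timesteps
`1, …, T` and over standard Gaussian noise `ε`, is at most `δ`, then the expected
squared distance between the one-step DDIM purified example and the clean example
is at most `((1 − ᾱ_T) T / ᾱ_T) δ`. -/
theorem adbm_theorem1 (d T : ℕ) (hd : 1 ≤ d) (hT : 1 ≤ T) (α : ℕ → ℝ)
    (hα : ∀ i, 1 ≤ i → i ≤ T → 0 < α i ∧ α i < 1)
    (abar : ℕ → ℝ)
    (habar : ∀ t, t ≤ T → abar t = ∏ i ∈ Finset.Icc 1 t, α i)
    (γ : Measure (EuclideanSpace ℝ (Fin d)))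
    (hγ : γ = Measure.map (MeasurableEquiv.toLp 2 (Fin d → ℝ)) (Measure.pi fun _ => gaussianReal 0 1))
    (x0 εa : EuclideanSpace ℝ (Fin d)) (δ : ℝ) (hδ : 0 ≤ δ)
    (εθ : EuclideanSpace ℝ (Fin d) → ℕ → EuclideanSpace ℝ (Fin d))
    (hεθ : ∀ t, 1 ≤ t → t ≤ T → Measurable fun x => εθ x t)
    (xtd : ℕ → EuclideanSpace ℝ (Fin d) → EuclideanSpace ℝ (Fin d))
    (hxtd : ∀ t, 1 ≤ t → t ≤ T → ∀ ε, xtd t ε =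
      Real.sqrt (abar t) • x0 + Real.sqrt (1 - abar t) • ε
        + (abar T * (1 - abar t) / (Real.sqrt (abar t) * (1 - abar T))) • εa)
    (hloss : (1 / (T : ℝ)) * ∑ t ∈ Finset.Icc 1 T,
      ∫ ε, ‖(abar T * Real.sqrt (1 - abar t) / ((1 - abar T) * Real.sqrt (abar t))) • εa
        + ε - εθ (xtd t ε) t‖ ^ 2 ∂γ ≤ δ)
    (xhat : EuclideanSpace ℝ (Fin d) → EuclideanSpace ℝ (Fin d))
    (hxhat : ∀ ε, xhat ε = x0 + εa
      + (Real.sqrt (1 - abar T) / Real.sqrt (abar T)) • (ε - εθ (xtd T ε) T)) :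
    ∫ ε, ‖xhat ε - x0‖ ^ 2 ∂γ ≤ ((1 - abar T) * T / abar T) * δ := by
  set a := abar T with ha
  -- basic bounds on a
  have habarT := habar T le_rfl
  have hmem : (1 : ℕ) ∈ Finset.Icc 1 T := by simp [hT]
  have ha_pos : 0 < a := by
    rw [ha, habarT]
    exact Finset.prod_pos fun i hi => (hα i (Finset.mem_Icc.mp hi).1 (Finset.mem_Icc.mp hi).2).1
  have ha_lt : a < 1 := by
    rw [ha, habarT, ← Finset.mul_prod_erase _ _ hmem]
    have h1 : α 1 < 1 := (hα 1 le_rfl hT).2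
    have h1p : 0 < α 1 := (hα 1 le_rfl hT).1
    have hrest : ∏ i ∈ (Finset.Icc 1 T).erase 1, α i ≤ 1 := by
      apply Finset.prod_le_one
      · intro i hi
        have hi' := Finset.mem_Icc.mp (Finset.mem_of_mem_erase hi)
        exact (hα i hi'.1 hi'.2).1.le
      · intro i hi
        have hi' := Finset.mem_Icc.mp (Finset.mem_of_mem_erase hi)
        exact (hα i hi'.1 hi'.2).2.le
    have hrestp : 0 < ∏ i ∈ (Finset.Icc 1 T).erase 1, α i :=
      Finset.prod_pos fun i hi =>
        (hα i (Finset.mem_Icc.mp (Finset.mem_of_mem_erase hi)).1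
          (Finset.mem_Icc.mp (Finset.mem_of_mem_erase hi)).2).1
    nlinarith
  have h1a : 0 < 1 - a := by linarith
  have hsa : Real.sqrt a * Real.sqrt a = a := Real.mul_self_sqrt ha_pos.le
  have hs1a : Real.sqrt (1 - a) * Real.sqrt (1 - a) = 1 - a := Real.mul_self_sqrt h1a.le
  have hsa_pos : 0 < Real.sqrt a := Real.sqrt_pos.mpr ha_pos
  have hs1a_pos : 0 < Real.sqrt (1 - a) := Real.sqrt_pos.mpr h1a
  set c : ℝ := Real.sqrt (1 - a) / Real.sqrt a with hc
  set k : ℝ := a * Real.sqrt (1 - a) / ((1 - a) * Real.sqrt a) with hk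
  have hck : c * k = 1 := by
    rw [hc, hk]
    field_simp
    nlinarith
  -- pointwise identity
  have hpt : ∀ ε, ‖xhat ε - x0‖ ^ 2
      = ((1 - a) / a) * ‖k • εa + ε - εθ (xtd T ε) T‖ ^ 2 := by
    intro ε
    have hv : xhat ε - x0 = c • (k • εa + ε - εθ (xtd T ε) T) := by
      rw [hxhat ε]
      have h2 : c • (k • εa + ε - εθ (xtd T ε) T)
          = (c * k) • εa + c • (ε - εθ (xtd T ε) T) := by module
      rw [h2, hck, one_smul]
      abel
    rw [hv, norm_smul, mul_pow, Real.norm_eq_abs, sq_abs]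
    congr 1
    rw [hc, div_pow, sq, sq, hsa, hs1a]
  have hint : ∫ ε, ‖xhat ε - x0‖ ^ 2 ∂γ
      = ((1 - a) / a) * ∫ ε, ‖k • εa + ε - εθ (xtd T ε) T‖ ^ 2 ∂γ := by
    simp_rw [hpt]
    exact integral_const_mul _ _
  set I : ℕ → ℝ := fun t =>
    ∫ ε, ‖(abar T * Real.sqrt (1 - abar t) / ((1 - abar T) * Real.sqrt (abar t))) • εa
        + ε - εθ (xtd t ε) t‖ ^ 2 ∂γ with hI
  have hIT : (∫ ε, ‖k • εa + ε - εθ (xtd T ε) T‖ ^ 2 ∂γ) = I T := rfl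
  have hInonneg : ∀ t, 0 ≤ I t := fun t =>
    integral_nonneg fun ε => sq_nonneg _
  have hTmem : T ∈ Finset.Icc 1 T := by simp [hT]
  have hle_sum : I T ≤ ∑ t ∈ Finset.Icc 1 T, I t :=
    Finset.single_le_sum (fun t _ => hInonneg t) hTmem
  have hTpos : (0 : ℝ) < T := by exact_mod_cast hT
  have hsum_le : ∑ t ∈ Finset.Icc 1 T, I t ≤ T * δ := by
    rw [one_div] at hloss
    calc ∑ t ∈ Finset.Icc 1 T, I t
        = T * ((T : ℝ)⁻¹ * ∑ t ∈ Finset.Icc 1 T, I t) := by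
          field_simp
      _ ≤ T * δ := by
          apply mul_le_mul_of_nonneg_left _ hTpos.le
          exact hloss
  rw [hint, hIT]
  have : ((1 - a) / a) * I T ≤ ((1 - a) / a) * (T * δ) := by
    apply mul_le_mul_of_nonneg_left (hle_sum.trans hsum_le)
    positivity
  calc ((1 - a) / a) * I T ≤ ((1 - a) / a) * (T * δ) := this
    _ = ((1 - a) * T / a) * δ := by ring
end

section
/- Let d ≥ 1, let t be an index with real parameter ᾱ_t ∈ (0, 1), let ε_a ∈ ℝ^d with ε_a ≠ 0, and let k be a real with 0 ≤ k < √ᾱ_t. Let γ be the standard Gaussian measure on ℝ^d (the d-fold product of the Gaussian measure on ℝ with mean 0 and variance 1). Then ∫ exp(−‖√(1 − ᾱ_t) ε + k ε_a‖²/(2(1 − ᾱ_t))) dγ(ε) > ∫ exp(−‖√(1 − ᾱ_t) ε + √ᾱ_t ε_a‖²/(2(1 − ᾱ_t))) dγ(ε). -/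
open Real MeasureTheory ProbabilityTheory


lemma oneDim (σ a : ℝ) (hσ : 0 < σ) :
    ∫ x, Real.exp (-(σ*x + a)^2/(2*σ^2)) ∂(gaussianReal 0 1)
      = Real.exp (-a^2/(4*σ^2)) / Real.sqrt 2 := by
  rw [gaussianReal_of_var_ne_zero 0 one_ne_zero]
  rw [show gaussianPDF 0 1 = fun x => ((Real.toNNReal (gaussianPDFReal 0 1 x) : NNReal) : ENNReal) from rfl]
  rw [integral_withDensity_eq_integral_smul
    ((measurable_gaussianPDFReal 0 1).real_toNNReal)]
  have hpdf : ∀ x : ℝ, (Real.toNNReal (gaussianPDFReal 0 1 x) : ℝ) = gaussianPDFReal 0 1 x :=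
    fun x => Real.coe_toNNReal _ (gaussianPDFReal_nonneg 0 1 x)
  have hexp : ∀ x : ℝ, (Real.toNNReal (gaussianPDFReal 0 1 x)) • Real.exp (-(σ*x + a)^2/(2*σ^2))
      = (Real.sqrt (2 * π))⁻¹ * (Real.exp (-a^2/(4*σ^2)) * Real.exp (-(x + a/(2*σ))^2)) := by
    intro x
    rw [NNReal.smul_def, smul_eq_mul, hpdf, gaussianPDFReal]
    push_cast
    rw [mul_one, mul_assoc, ← Real.exp_add, ← Real.exp_add]
    congr 2
    have hσ2 : (σ:ℝ) ≠ 0 := ne_of_gt hσ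
    field_simp
    ring
  simp_rw [hexp]
  rw [integral_const_mul, integral_const_mul]
  have : ∫ x : ℝ, Real.exp (-(x + a/(2*σ))^2) = Real.sqrt π := by
    rw [show (fun x : ℝ => Real.exp (-(x + a/(2*σ))^2)) = (fun x : ℝ => Real.exp (-x^2)) ∘ (fun x => x + a/(2*σ)) from rfl]
    rw [Function.comp_def, MeasureTheory.integral_add_right_eq_self (fun x : ℝ => Real.exp (-x^2)) (a/(2*σ))]
    simpa using integral_gaussian 1
  rw [this]
  rw [Real.sqrt_mul (by norm_num) π]
  have hπ : Real.sqrt π ≠ 0 := ne_of_gt (Real.sqrt_pos.mpr Real.pi_pos)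
  field_simp
lemma piProd {d : ℕ} (f : Fin d → ℝ → ℝ) :
    ∫ x : Fin d → ℝ, ∏ i, f i (x i) ∂(Measure.pi fun _ => gaussianReal 0 1)
      = ∏ i, ∫ x, f i x ∂(gaussianReal 0 1) := by
  letI : MeasureSpace ℝ := ⟨gaussianReal 0 1⟩
  haveI : SigmaFinite (volume : Measure ℝ) := inferInstanceAs (SigmaFinite (gaussianReal 0 1))
  exact MeasureTheory.integral_fintype_prod_eq_prod f

lemma multiDim (d : ℕ) (σ : ℝ) (hσ : 0 < σ) (v : EuclideanSpace ℝ (Fin d)) :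
    ∫ ε : Fin d → ℝ, Real.exp (-‖σ • WithLp.toLp 2 ε + v‖^2/(2*σ^2)) ∂(Measure.pi fun _ => gaussianReal 0 1)
      = (1/Real.sqrt 2)^d * Real.exp (-‖v‖^2/(4*σ^2)) := by
  have hnorm : ∀ ε : Fin d → ℝ, ‖σ • WithLp.toLp 2 ε + v‖^2 = ∑ i, (σ * ε i + v i)^2 := by
    intro ε
    rw [EuclideanSpace.norm_eq, Real.sq_sqrt (by positivity)]
    simp [PiLp.add_apply, PiLp.smul_apply, PiLp.toLp_apply, smul_eq_mul, sq_abs]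
  have hrw : ∀ ε : Fin d → ℝ,
      Real.exp (-‖σ • WithLp.toLp 2 ε + v‖^2/(2*σ^2)) = ∏ i, Real.exp (-(σ * ε i + v i)^2/(2*σ^2)) := by
    intro ε
    rw [hnorm, ← Real.exp_sum]
    congr 1
    rw [neg_div, Finset.sum_div, ← Finset.sum_neg_distrib]
    simp only [neg_div]
  simp_rw [hrw]
  rw [piProd (fun i x => Real.exp (-(σ * x + v i)^2/(2*σ^2)))]
  have h1 : ∀ i, ∫ x, Real.exp (-(σ * x + v i)^2/(2*σ^2)) ∂(gaussianReal 0 1)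
      = Real.exp (-(v i)^2/(4*σ^2)) / Real.sqrt 2 := fun i => oneDim σ (v i) hσ
  simp_rw [h1]
  rw [Finset.prod_div_distrib, ← Real.exp_sum]
  have : ‖v‖^2 = ∑ i, (v i)^2 := by
    rw [EuclideanSpace.norm_eq, Real.sq_sqrt (by positivity)]
    simp [sq_abs]
  rw [this, Finset.prod_const]
  rw [neg_div, Finset.sum_div, ← Finset.sum_neg_distrib]
  simp only [neg_div, Finset.card_univ, Fintype.card_fin]
  ring

/-- Core inequality in the proof of Theorem 2 of the paper: the Gaussian-kernel
expectation of the ADBM residual `√(1−ᾱ_t)ε + k ε_a` (with `0 ≤ k < √ᾱ_t`) strictly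
exceeds that of the DiffPure residual `√(1−ᾱ_t)ε + √ᾱ_t ε_a`. -/
theorem adbm_kernel_expectation_gt_diffpure (d : ℕ) (hd : 1 ≤ d)
    (abart : ℝ) (h0 : 0 < abart) (h1 : abart < 1)
    (εa : EuclideanSpace ℝ (Fin d)) (hεa : εa ≠ 0)
    (k : ℝ) (hk0 : 0 ≤ k) (hk : k < Real.sqrt abart)
    (γ : Measure (EuclideanSpace ℝ (Fin d)))
    (hγ : γ = (Measure.pi fun _ => gaussianReal 0 1).map
      (MeasurableEquiv.toLp 2 (Fin d → ℝ))) :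
    ∫ ε, Real.exp (-‖Real.sqrt (1 - abart) • ε + k • εa‖ ^ 2 / (2 * (1 - abart))) ∂γ
      > ∫ ε, Real.exp
          (-‖Real.sqrt (1 - abart) • ε + Real.sqrt abart • εa‖ ^ 2 / (2 * (1 - abart))) ∂γ := by
  subst hγ
  rw [integral_map_equiv, integral_map_equiv]
  simp only [MeasurableEquiv.coe_toLp]
  set σ := Real.sqrt (1 - abart) with hσdef
  have hσ : 0 < σ := Real.sqrt_pos.mpr (by linarith)
  have hσ2 : σ ^ 2 = 1 - abart := Real.sq_sqrt (by linarith)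
  rw [show (2 * (1 - abart)) = 2 * σ ^ 2 by rw [hσ2]]
  rw [multiDim d σ hσ (k • εa), multiDim d σ hσ (Real.sqrt abart • εa)]
  have hpos : (0:ℝ) < (1 / Real.sqrt 2) ^ d := by positivity
  apply mul_lt_mul_of_pos_left _ hpos
  apply Real.exp_lt_exp.mpr
  have hεn : 0 < ‖εa‖ := norm_pos_iff.mpr hεa
  have hn1 : ‖k • εa‖ ^ 2 = k ^ 2 * ‖εa‖ ^ 2 := by
    rw [norm_smul, Real.norm_eq_abs, mul_pow, sq_abs]
  have hn2 : ‖Real.sqrt abart • εa‖ ^ 2 = abart * ‖εa‖ ^ 2 := by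
    rw [norm_smul, Real.norm_eq_abs, mul_pow, sq_abs, Real.sq_sqrt h0.le]
  have hk2 : k ^ 2 < abart := by
    calc k ^ 2 < Real.sqrt abart ^ 2 := by
          apply pow_lt_pow_left₀ hk hk0; norm_num
      _ = abart := Real.sq_sqrt h0.le
  rw [hn1, hn2]
  have h4 : (0:ℝ) < 4 * σ ^ 2 := by positivity
  rw [div_lt_div_iff₀ h4 h4]
  nlinarith [mul_pos (mul_pos (sub_pos.mpr hk2) (pow_pos hεn 2)) h4]
end

section
/- Let d ≥ 1, let a > 0 be a real, let ε_a ∈ ℝ^d with ε_a ≠ 0, and let k, s be reals with 0 ≤ k < s. Let γ be the standard Gaussian measure on ℝ^d (the d-fold product of the Gaussian measure on ℝ with mean 0 and variance 1). Then ∫ ‖a ε + k ε_a‖ dγ(ε) < ∫ ‖a ε + s ε_a‖ dγ(ε). -/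
open Real MeasureTheory ProbabilityTheory

private lemma aux_int_abs_gaussian : Integrable (fun x : ℝ => |x|) (gaussianReal 0 1) := by
  rw [gaussianReal_of_var_ne_zero 0 one_ne_zero]
  rw [integrable_withDensity_iff (measurable_gaussianPDF 0 1)
    (ae_of_all _ fun x => ENNReal.ofReal_lt_top)]
  have key : Integrable (fun x : ℝ => |x| * exp (-(1/2) * x ^ 2)) volume := by
    have h := (integrable_mul_exp_neg_mul_sq (b := 1/2) (by norm_num)).abs
    refine h.congr (ae_of_all _ fun x => ?_)
    simp only [abs_mul, abs_of_pos (exp_pos _)]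
  have heq : (fun x : ℝ => |x| * (gaussianPDF 0 1 x).toReal)
      = fun x => (√(2 * π))⁻¹ * (|x| * exp (-(1/2) * x ^ 2)) := by
    funext x
    rw [gaussianPDF, ENNReal.toReal_ofReal (gaussianPDFReal_nonneg _ _ _)]
    simp only [gaussianPDFReal]
    push_cast
    ring_nf
  rw [heq]
  exact key.const_mul _

private lemma aux_map_eval (d : ℕ) (i : Fin d) :
    (Measure.pi fun _ : Fin d => gaussianReal 0 1).map (Function.eval i) = gaussianReal 0 1 := by
  ext s hs
  rw [Measure.map_apply (measurable_pi_apply i) hs, Set.eval_preimage, Measure.pi_pi]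
  rw [Finset.prod_eq_single i]
  · simp
  · intro j _ hj; simp [Function.update_of_ne hj]
  · simp

private lemma aux_norm_le_sum (d : ℕ) (x : EuclideanSpace ℝ (Fin d)) : ‖x‖ ≤ ∑ i, |x i| := by
  rw [EuclideanSpace.norm_eq]
  have h1 : ∑ i, ‖x i‖ ^ 2 ≤ (∑ i, ‖x i‖) ^ 2 :=
    Finset.sum_sq_le_sq_sum_of_nonneg (fun i _ => norm_nonneg _)
  calc √(∑ i, ‖x i‖ ^ 2) ≤ √((∑ i, ‖x i‖) ^ 2) := Real.sqrt_le_sqrt h1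
    _ = ∑ i, ‖x i‖ := by
        rw [Real.sqrt_sq (Finset.sum_nonneg fun i _ => norm_nonneg _)]
    _ = ∑ i, |x i| := by simp [Real.norm_eq_abs]

private lemma aux_int_norm (d : ℕ) :
    Integrable (fun ε : EuclideanSpace ℝ (Fin d) => ‖ε‖)
      ((Measure.pi fun _ : Fin d => gaussianReal 0 1).map (MeasurableEquiv.toLp 2 (Fin d → ℝ))) := by
  rw [integrable_map_equiv]
  have hcoord : ∀ i : Fin d, Integrable (fun ε : Fin d → ℝ => |ε i|)
      (Measure.pi fun _ : Fin d => gaussianReal 0 1) := by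
    intro i
    have hmeas : AEMeasurable (Function.eval i : (Fin d → ℝ) → ℝ)
        (Measure.pi fun _ : Fin d => gaussianReal 0 1) := (measurable_pi_apply i).aemeasurable
    have hsm : AEStronglyMeasurable (fun x : ℝ => |x|)
        ((Measure.pi fun _ : Fin d => gaussianReal 0 1).map (Function.eval i)) :=
      continuous_abs.aestronglyMeasurable
    have := (integrable_map_measure hsm hmeas).mp (by rw [aux_map_eval d i]; exact aux_int_abs_gaussian)
    exact this
  have hsum : Integrable (fun ε : Fin d → ℝ => ∑ i, |ε i|)
      (Measure.pi fun _ : Fin d => gaussianReal 0 1) :=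
    integrable_finset_sum _ (fun i _ => hcoord i)
  refine hsum.mono' (continuous_norm.comp (PiLp.continuous_toLp 2 _)).aestronglyMeasurable
    (ae_of_all _ fun ε => ?_)
  simp only [Function.comp_apply, MeasurableEquiv.coe_toLp]
  rw [Real.norm_of_nonneg (norm_nonneg _)]
  exact aux_norm_le_sum d (WithLp.toLp 2 ε)

set_option maxHeartbeats 1000000 in
/-- Expectation inequality from the proof of Theorem 2: for `0 ≤ k < s` and `ε_a ≠ 0`,
the expected norm of `aε + k ε_a` over standard Gaussian `ε` is strictly smaller than
the expected norm of `aε + s ε_a`. -/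
theorem gaussian_shifted_norm_expectation_lt (d : ℕ) (hd : 1 ≤ d)
    (a : ℝ) (ha : 0 < a)
    (εa : EuclideanSpace ℝ (Fin d)) (hεa : εa ≠ 0)
    (k s : ℝ) (hk0 : 0 ≤ k) (hks : k < s)
    (γ : Measure (EuclideanSpace ℝ (Fin d)))
    (hγ : γ = (Measure.pi fun _ => gaussianReal 0 1).map (MeasurableEquiv.toLp 2 (Fin d → ℝ))) :
    ∫ ε, ‖a • ε + k • εa‖ ∂γ < ∫ ε, ‖a • ε + s • εa‖ ∂γ := by
  have hs0 : 0 < s := lt_of_le_of_lt hk0 hks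
  have hsne : s ≠ 0 := hs0.ne'
  set l : ℝ := k / s with hl
  have hl0 : 0 ≤ l := div_nonneg hk0 hs0.le
  have hl1 : l < 1 := (div_lt_one hs0).2 hks
  set p : ℝ := (1 + l) / 2 with hp
  set q : ℝ := (1 - l) / 2 with hq
  have hp0 : 0 < p := by positivity
  have hq0 : 0 < q := by simp only [hq]; linarith
  have hpq : p + q = 1 := by simp only [hp, hq]; ring
  -- pointwise inequality
  have hle : ∀ ε : EuclideanSpace ℝ (Fin d),
      ‖a • ε + k • εa‖ ≤ p * ‖a • ε + s • εa‖ + q * ‖a • ε - s • εa‖ := by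
    intro ε
    have hdecomp : a • ε + k • εa = p • (a • ε + s • εa) + q • (a • ε - s • εa) := by
      simp only [hp, hq, hl]
      match_scalars
      · field_simp; ring
      · field_simp; ring
    calc ‖a • ε + k • εa‖ = ‖p • (a • ε + s • εa) + q • (a • ε - s • εa)‖ := by rw [hdecomp]
      _ ≤ ‖p • (a • ε + s • εa)‖ + ‖q • (a • ε - s • εa)‖ := norm_add_le _ _
      _ = p * ‖a • ε + s • εa‖ + q * ‖a • ε - s • εa‖ := by
          rw [norm_smul, norm_smul, Real.norm_of_nonneg hp0.le, Real.norm_of_nonneg hq0.le]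
  -- strict pointwise inequality on a set
  have hstrict : ∀ ε : EuclideanSpace ℝ (Fin d), a * ‖ε‖ < s * ‖εa‖ →
      ‖a • ε + k • εa‖ < p * ‖a • ε + s • εa‖ + q * ‖a • ε - s • εa‖ := by
    intro ε hε
    have hdecomp2 : a • ε + k • εa = l • (a • ε + s • εa) + (1 - l) • (a • ε) := by
      simp only [hl]
      match_scalars
      · field_simp; ring
      · field_simp
    have h1 : ‖a • ε + k • εa‖ ≤ l * ‖a • ε + s • εa‖ + (1 - l) * (a * ‖ε‖) := by
      calc ‖a • ε + k • εa‖ = ‖l • (a • ε + s • εa) + (1 - l) • (a • ε)‖ := by rw [hdecomp2]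
        _ ≤ ‖l • (a • ε + s • εa)‖ + ‖(1 - l) • (a • ε)‖ := norm_add_le _ _
        _ = l * ‖a • ε + s • εa‖ + (1 - l) * ‖a • ε‖ := by
            rw [norm_smul, norm_smul, Real.norm_of_nonneg hl0,
              Real.norm_of_nonneg (by linarith : (0:ℝ) ≤ 1 - l)]
        _ = l * ‖a • ε + s • εa‖ + (1 - l) * (a * ‖ε‖) := by
            rw [norm_smul, Real.norm_of_nonneg ha.le]
    have h2 : 2 * (s * ‖εa‖) ≤ ‖a • ε + s • εa‖ + ‖a • ε - s • εa‖ := by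
      have : (a • ε + s • εa) - (a • ε - s • εa) = (2 * s) • εa := by module
      calc 2 * (s * ‖εa‖) = ‖(2 * s) • εa‖ := by
            rw [norm_smul, Real.norm_of_nonneg (by linarith : (0:ℝ) ≤ 2 * s)]; ring
        _ = ‖(a • ε + s • εa) - (a • ε - s • εa)‖ := by rw [this]
        _ ≤ ‖a • ε + s • εa‖ + ‖a • ε - s • εa‖ := norm_sub_le _ _
    have h3 : (1 - l) * (a * ‖ε‖) < (1 - l) * ((‖a • ε + s • εa‖ + ‖a • ε - s • εa‖) / 2) := by
      apply mul_lt_mul_of_pos_left _ (by linarith : (0:ℝ) < 1 - l)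
      calc a * ‖ε‖ < s * ‖εa‖ := hε
        _ ≤ (‖a • ε + s • εa‖ + ‖a • ε - s • εa‖) / 2 := by linarith
    calc ‖a • ε + k • εa‖ ≤ l * ‖a • ε + s • εa‖ + (1 - l) * (a * ‖ε‖) := h1
      _ < l * ‖a • ε + s • εa‖ + (1 - l) * ((‖a • ε + s • εa‖ + ‖a • ε - s • εa‖) / 2) := by
          linarith
      _ = p * ‖a • ε + s • εa‖ + q * ‖a • ε - s • εa‖ := by simp only [hp, hq]; ring
  -- integrability
  have hIntnorm : Integrable (fun ε : EuclideanSpace ℝ (Fin d) => ‖ε‖) γ := by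
    rw [hγ]; exact aux_int_norm d
  have _inst : IsProbabilityMeasure γ := by
    rw [hγ]
    exact Measure.isProbabilityMeasure_map (MeasurableEquiv.toLp 2 (Fin d → ℝ)).measurable.aemeasurable
  have hInt : ∀ v : EuclideanSpace ℝ (Fin d), Integrable (fun ε => ‖a • ε + v‖) γ := by
    intro v
    refine Integrable.mono' ((hIntnorm.const_mul a).add (integrable_const ‖v‖)) ?_
      (ae_of_all _ fun ε => ?_)
    · exact ((continuous_const_smul a).add continuous_const).norm.aestronglyMeasurable
    · rw [Real.norm_of_nonneg (norm_nonneg _)]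
      calc ‖a • ε + v‖ ≤ ‖a • ε‖ + ‖v‖ := norm_add_le _ _
        _ = a * ‖ε‖ + ‖v‖ := by rw [norm_smul, Real.norm_of_nonneg ha.le]
  have Ik : Integrable (fun ε => ‖a • ε + k • εa‖) γ := hInt _
  have Ip : Integrable (fun ε => ‖a • ε + s • εa‖) γ := hInt _
  have Im : Integrable (fun ε => ‖a • ε - s • εa‖) γ := by
    have := hInt (-(s • εa))
    simpa [sub_eq_add_neg] using this
  -- symmetry under negation
  have hneg : ∫ ε, ‖a • ε - s • εa‖ ∂γ = ∫ ε, ‖a • ε + s • εa‖ ∂γ := by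
    have hmp : MeasurePreserving (fun x : EuclideanSpace ℝ (Fin d) => -x) γ γ := by
      subst hγ
      have h1 : (gaussianReal 0 1).map (fun x : ℝ => -x) = gaussianReal 0 1 := by
        have : (fun x : ℝ => -x) = (fun x => (-1) * x) := by funext x; ring
        rw [this, gaussianReal_map_const_mul]; norm_num
      have hpi := MeasureTheory.measurePreserving_pi (fun _ : Fin d => gaussianReal 0 1)
        (fun _ => gaussianReal 0 1) (f := fun _ x => -x) (fun i => ⟨measurable_neg, h1⟩)
      have he := (MeasurableEquiv.toLp 2 (Fin d → ℝ)).measurable.measurePreserving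
        (Measure.pi fun _ : Fin d => gaussianReal 0 1)
      convert (he.comp hpi).comp (MeasurePreserving.symm _ he) using 1
      funext x; ext i; simp
    have hemb : MeasurableEmbedding (fun x : EuclideanSpace ℝ (Fin d) => -x) :=
      (Homeomorph.neg (EuclideanSpace ℝ (Fin d))).measurableEmbedding
    calc ∫ ε, ‖a • ε - s • εa‖ ∂γ
        = ∫ ε, ‖a • (-ε) - s • εa‖ ∂γ :=
          (hmp.integral_comp hemb (fun ε => ‖a • ε - s • εa‖)).symm
      _ = ∫ ε, ‖a • ε + s • εa‖ ∂γ := by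
          congr 1; funext ε
          rw [smul_neg, show -(a • ε) - s • εa = -(a • ε + s • εa) by module, norm_neg]
  -- integral of the majorant
  have hgint : ∫ ε, (p * ‖a • ε + s • εa‖ + q * ‖a • ε - s • εa‖) ∂γ
      = ∫ ε, ‖a • ε + s • εa‖ ∂γ := by
    rw [integral_add (Ip.const_mul p) (Im.const_mul q), integral_const_mul, integral_const_mul,
      hneg, ← add_mul, hpq, one_mul]
  -- strict integral inequality
  have hgI : Integrable (fun ε => p * ‖a • ε + s • εa‖ + q * ‖a • ε - s • εa‖) γ :=
    (Ip.const_mul p).add (Im.const_mul q)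
  have hdiff : 0 < ∫ ε, ((p * ‖a • ε + s • εa‖ + q * ‖a • ε - s • εa‖) - ‖a • ε + k • εa‖) ∂γ := by
    refine (integral_pos_iff_support_of_nonneg (fun ε => sub_nonneg.2 (hle ε)) (hgI.sub Ik)).mpr ?_
    have hSopen : IsOpen {ε : EuclideanSpace ℝ (Fin d) | a * ‖ε‖ < s * ‖εa‖} :=
      isOpen_lt (continuous_const.mul continuous_norm) continuous_const
    have hSsub : {ε : EuclideanSpace ℝ (Fin d) | a * ‖ε‖ < s * ‖εa‖} ⊆
        Function.support (fun ε =>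
          (p * ‖a • ε + s • εa‖ + q * ‖a • ε - s • εa‖) - ‖a • ε + k • εa‖) := by
      intro ε hε
      have := hstrict ε hε
      simp only [Function.mem_support]
      exact sub_ne_zero.2 this.ne'
    have hSpos : 0 < γ {ε : EuclideanSpace ℝ (Fin d) | a * ‖ε‖ < s * ‖εa‖} := by
      subst hγ
      haveI : (gaussianReal 0 1 : Measure ℝ).IsOpenPosMeasure :=
        (gaussianReal_absolutelyContinuous' 0 one_ne_zero).isOpenPosMeasure
      haveI : (Measure.pi fun _ : Fin d => gaussianReal 0 1).IsOpenPosMeasure :=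
        MeasureTheory.Measure.pi.isOpenPosMeasure _
      rw [Measure.map_apply (MeasurableEquiv.toLp 2 (Fin d → ℝ)).measurable hSopen.measurableSet]
      refine (hSopen.preimage (PiLp.continuous_toLp 2 _)).measure_pos _ ⟨0, ?_⟩
      simp only [Set.mem_preimage, MeasurableEquiv.coe_toLp, WithLp.toLp_zero, Set.mem_setOf_eq,
        norm_zero, mul_zero]
      exact mul_pos hs0 (norm_pos_iff.2 hεa)
    exact lt_of_lt_of_le hSpos (measure_mono hSsub)
  have := integral_sub hgI Ik
  rw [this] at hdiff
  linarith [hgint, hdiff]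
end
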